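/- arXiv:0806.4547 — 6 statements merged into one kernel-verified Lean document; each statement's English description precedes it below -/
import Mathlib

section
/- Let Q : D → D be an endofunctor of a category D and α : Id ⇒ Q a natural transformation. If for every object X the map Q(α_X) is an isomorphism and the map α_{Q(X)} is a monomorphism, then for every object X the maps Q(α_X) and α_{Q(X)} from Q(X) to Q(Q(X)) are equal. -/
open CategoryTheory CategoryTheory.Limits

universe v u

/-- `f : A ⟶ B` is a retract of `g : X ⟶ Y` in the arrow category. -/
def IsRetractOfArrow {C : Type u} [Category.{v} C] {A B X Y : C}
    (f : A ⟶ B) (g : X ⟶ Y) : Prop :=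
  ∃ (iA : A ⟶ X) (rA : X ⟶ A) (iB : B ⟶ Y) (rB : Y ⟶ B),
    iA ≫ rA = 𝟙 A ∧ iB ≫ rB = 𝟙 B ∧ iA ≫ g = f ≫ iB ∧ rA ≫ f = g ≫ rB

theorem stmt0 {D : Type u} [Category.{v} D] (Q : D ⥤ D) (α : 𝟭 D ⟶ Q)
    (h1 : ∀ X : D, IsIso (Q.map (α.app X)))
    (h2 : ∀ X : D, Mono (α.app (Q.obj X))) :
    ∀ X : D, Q.map (α.app X) = α.app (Q.obj X) := by
  intro X
  -- naturality at α.app X, for any object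
  have nat : ∀ Y : D, α.app Y ≫ α.app (Q.obj Y) = α.app Y ≫ Q.map (α.app Y) := by
    intro Y
    simpa using α.naturality (α.app Y)
  -- apply Q and cancel the iso Q.map (α.app X)
  have key : Q.map (α.app (Q.obj X)) = Q.map (Q.map (α.app X)) := by
    have h := congrArg Q.map (nat X)
    rw [Q.map_comp, Q.map_comp] at h
    haveI := h1 X
    exact (cancel_epi (Q.map (α.app X))).mp h
  haveI := h2 (Q.obj X)
  rw [← cancel_mono (α.app (Q.obj (Q.obj X)))]
  calc Q.map (α.app X) ≫ α.app (Q.obj (Q.obj X))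
      = α.app (Q.obj X) ≫ Q.map (Q.map (α.app X)) := by
        simpa using α.naturality (Q.map (α.app X))
    _ = α.app (Q.obj X) ≫ Q.map (α.app (Q.obj X)) := by rw [key]
    _ = α.app (Q.obj X) ≫ α.app (Q.obj (Q.obj X)) := (nat (Q.obj X)).symm
end

section
/- Let Q : D → D be an endofunctor and α : Id ⇒ Q a natural transformation such that Q(α_X) = α_{Q X} for every object X (both as maps Q X → Q(Q X)) and α_{Q X} is an isomorphism for every X. If 1 is a terminal object of D, then α_1 : 1 → Q(1) is a retract (in the arrow category) of α_{Q(1)}, and hence α_1 is an isomorphism. -/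
open CategoryTheory CategoryTheory.Limits

universe v u

theorem stmt2 {D : Type u} [Category.{v} D] [HasTerminal D]
    (Q : D ⥤ D) (α : 𝟭 D ⟶ Q)
    (hcoh : ∀ X : D, Q.map (α.app X) = α.app (Q.obj X))
    (hiso : ∀ X : D, IsIso (α.app (Q.obj X))) :
    IsRetractOfArrow (α.app (⊤_ D)) (α.app (Q.obj (⊤_ D))) ∧
      IsIso (α.app (⊤_ D)) := by
  haveI := hiso (⊤_ D)
  set T := ⊤_ D
  have hret : IsRetractOfArrow (α.app T) (α.app (Q.obj T)) := by
    refine ⟨α.app T, terminal.from _, Q.map (α.app T), Q.map (terminal.from _),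
      terminal.hom_ext _ _, ?_, ?_, ?_⟩
    · rw [← Q.map_comp, terminal.hom_ext (α.app T ≫ terminal.from _) (𝟙 T), Q.map_id]
    · rw [hcoh]
    · simpa using α.naturality (terminal.from (Q.obj T))
  refine ⟨hret, ?_⟩
  obtain ⟨iA, rA, iB, rB, h1, h2, h3, h4⟩ := hret
  refine ⟨iB ≫ inv (α.app (Q.obj T)) ≫ rA, ?_, ?_⟩
  · rw [← Category.assoc, ← h3, Category.assoc, IsIso.hom_inv_id_assoc, h1]
  · rw [Category.assoc, Category.assoc, h4, IsIso.inv_hom_id_assoc, h2]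
end

section
/- Let C be a model category with weak equivalences W, cofibrations Cof, fibrations Fib. Suppose Q : C → C is a functor and α : Id ⇒ Q a natural transformation satisfying: (A1) Q preserves weak equivalences; (A2) Q(α_X) is a weak equivalence for all X. Then a morphism f of C is a trivial fibration (i.e., both a fibration and a weak equivalence) if and only if f is both a Q-fibration and a Q-equivalence, where a Q-equivalence is a map f with Q(f) a weak equivalence and a Q-fibration is a map with the right lifting property with respect to all cofibrations that are Q-equivalences. -/
open CategoryTheory CategoryTheory.Limits

universe v u

/-- A (Quillen) model structure on a category `C`. -/
structure ModelStructure (C : Type u) [Category.{v} C] where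
  W : MorphismProperty C
  Cof : MorphismProperty C
  Fib : MorphismProperty C
  w_comp : ∀ {X Y Z : C} (f : X ⟶ Y) (g : Y ⟶ Z), W f → W g → W (f ≫ g)
  w_cancel_left : ∀ {X Y Z : C} (f : X ⟶ Y) (g : Y ⟶ Z), W f → W (f ≫ g) → W g
  w_cancel_right : ∀ {X Y Z : C} (f : X ⟶ Y) (g : Y ⟶ Z), W g → W (f ≫ g) → W f
  w_retract : ∀ {A B X Y : C} {f : A ⟶ B} {g : X ⟶ Y},
      IsRetractOfArrow f g → W g → W f
  cof_retract : ∀ {A B X Y : C} {f : A ⟶ B} {g : X ⟶ Y},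
      IsRetractOfArrow f g → Cof g → Cof f
  fib_retract : ∀ {A B X Y : C} {f : A ⟶ B} {g : X ⟶ Y},
      IsRetractOfArrow f g → Fib g → Fib f
  lift_trivCof_fib : ∀ {A B X Y : C} (i : A ⟶ B) (p : X ⟶ Y),
      Cof i → W i → Fib p → HasLiftingProperty i p
  lift_cof_trivFib : ∀ {A B X Y : C} (i : A ⟶ B) (p : X ⟶ Y),
      Cof i → Fib p → W p → HasLiftingProperty i p
  fact_trivCof_fib : ∀ {X Y : C} (f : X ⟶ Y), ∃ (Z : C) (i : X ⟶ Z) (p : Z ⟶ Y),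
      Cof i ∧ W i ∧ Fib p ∧ i ≫ p = f
  fact_cof_trivFib : ∀ {X Y : C} (f : X ⟶ Y), ∃ (Z : C) (i : X ⟶ Z) (p : Z ⟶ Y),
      Cof i ∧ Fib p ∧ W p ∧ i ≫ p = f

variable {C : Type u} [Category.{v} C]

/-- `Q`-equivalences: maps sent by `Q` to weak equivalences. -/
def QEquiv (M : ModelStructure C) (Q : C ⥤ C) : MorphismProperty C :=
  fun _ _ f => M.W (Q.map f)

/-- `Q`-fibrations: maps with the right lifting property with respect to
cofibrations which are `Q`-equivalences. -/
def QFib (M : ModelStructure C) (Q : C ⥤ C) : MorphismProperty C :=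
  fun _ _ f => ∀ ⦃A B : C⦄ (i : A ⟶ B), M.Cof i → M.W (Q.map i) →
    HasLiftingProperty i f

theorem stmt5 (M : ModelStructure C) (Q : C ⥤ C) (α : 𝟭 C ⟶ Q)
    (A1 : ∀ {X Y : C} (f : X ⟶ Y), M.W f → M.W (Q.map f))
    (A2 : ∀ X : C, M.W (Q.map (α.app X))) :
    ∀ {X Y : C} (f : X ⟶ Y),
      (M.Fib f ∧ M.W f) ↔ (QFib M Q f ∧ M.W (Q.map f)) := by
  intro X Y f
  constructor
  · rintro ⟨hfib, hw⟩
    exact ⟨fun A B i hc _ => M.lift_cof_trivFib i f hc hfib hw, A1 f hw⟩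
  · rintro ⟨hqfib, hqw⟩
    obtain ⟨Z, i, p, hci, hfp, hwp, hip⟩ := M.fact_cof_trivFib f
    have hQi : M.W (Q.map i) := by
      apply M.w_cancel_right (Q.map i) (Q.map p) (A1 p hwp)
      rw [← Q.map_comp, hip]; exact hqw
    have hlp : HasLiftingProperty i f := hqfib i hci hQi
    have hsq : 𝟙 X ≫ f = i ≫ p := by simp [hip]
    have sq : CommSq (𝟙 X) i f p := ⟨hsq⟩
    have hret : IsRetractOfArrow f p :=
      ⟨i, sq.lift, 𝟙 Y, 𝟙 Y, sq.fac_left, Category.comp_id _, by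
        simp [hip], by simp [sq.fac_right]⟩
    exact ⟨M.fib_retract hret hfp, M.w_retract hret hwp⟩
end

section
/- In a model category, the class of weak equivalences satisfies the two-out-of-six property: if f : A → B, g : B → C, h : C → D are morphisms such that g ∘ f and h ∘ g are weak equivalences, then f, g, h, and h ∘ g ∘ f are weak equivalences. -/
open CategoryTheory CategoryTheory.Limits

universe v u

theorem stmt9 {C : Type u} [Category.{v} C] (M : ModelStructure C)
    {A B X D : C} (f : A ⟶ B) (g : B ⟶ X) (h : X ⟶ D)
    (hgf : M.W (f ≫ g)) (hhg : M.W (g ≫ h)) :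
    M.W f ∧ M.W g ∧ M.W h ∧ M.W (f ≫ g ≫ h) := by

  -- Step 1: factor g = c ≫ t with c a cofibration and t a trivial fibration.
  obtain ⟨Y, c, t, hc_cof, ht_fib, ht_w, hct⟩ := M.fact_cof_trivFib g
  -- f ≫ c is a weak equivalence
  have hfc : M.W (f ≫ c) := by
    refine M.w_cancel_right (f ≫ c) t ht_w ?_
    rw [Category.assoc, hct]; exact hgf
  -- Step 2: factor c ≫ (t ≫ h) = g ≫ h as k ≫ r, triv cofib then fib.
  have hch' : c ≫ (t ≫ h) = g ≫ h := by rw [← Category.assoc, hct]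
  obtain ⟨F, k, r, hk_cof, hk_w, hr_fib, hkr⟩ := M.fact_trivCof_fib (c ≫ (t ≫ h))
  have hr_w : M.W r := M.w_cancel_left k r hk_w (by rw [hkr, hch']; exact hhg)
  -- Step 3: lift c (cof) against r (trivial fib) to get m : Y ⟶ F
  have hlp1 := M.lift_cof_trivFib c r hc_cof hr_fib hr_w
  have sq1 : CommSq k c r (t ≫ h) := ⟨by rw [hkr]⟩
  obtain ⟨⟨⟨m, hm1, hm2⟩⟩⟩ := hlp1.sq_hasLift sq1
  -- hm1 : c ≫ m = k, hm2 : m ≫ r = t ≫ h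
  -- Step 4: factor m = j ≫ p, triv cofib then fib
  obtain ⟨Z, j, p, hj_cof, hj_w, hp_fib, hjp⟩ := M.fact_trivCof_fib m
  -- Step 5: lift k (triv cofib) against p (fib) in square with top c ≫ j, bottom 𝟙 F
  have hlp2 := M.lift_trivCof_fib k p hk_cof hk_w hp_fib
  have sq2 : CommSq (c ≫ j) k p (𝟙 F) := ⟨by
    rw [Category.assoc, hjp, hm1, Category.comp_id]⟩
  obtain ⟨⟨⟨l, hl1, hl2⟩⟩⟩ := hlp2.sq_hasLift sq2
  -- hl1 : k ≫ l = c ≫ j, hl2 : l ≫ p = 𝟙 F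
  -- Step 6: p ≫ l is a weak equivalence, by cancellation with f ≫ c ≫ j
  have hfcj : M.W ((f ≫ c) ≫ j) := M.w_comp (f ≫ c) j hfc hj_w
  have key : ((f ≫ c) ≫ j) ≫ (p ≫ l) = (f ≫ c) ≫ j := by
    rw [Category.assoc, Category.assoc]
    conv_lhs => rw [← Category.assoc j p l, hjp, ← Category.assoc c m l, hm1, hl1,
      ← Category.assoc]
  have he : M.W (p ≫ l) :=
    M.w_cancel_left ((f ≫ c) ≫ j) (p ≫ l) hfcj (by rw [key]; exact hfcj)
  -- Step 7: l is a retract of p ≫ l, hence a weak equivalence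
  have hl_w : M.W l := by
    refine M.w_retract (f := l) (g := p ≫ l) ⟨l, p, 𝟙 Z, 𝟙 Z, hl2, Category.comp_id _, ?_, ?_⟩ he
    · rw [← Category.assoc, hl2, Category.id_comp, Category.comp_id]
    · rw [Category.comp_id]
  -- Step 8: assemble: c ≫ j = k ≫ l ∈ W, hence c ∈ W, hence g ∈ W
  have hcj : M.W (c ≫ j) := by rw [← hl1]; exact M.w_comp k l hk_w hl_w
  have hc_w : M.W c := M.w_cancel_right c j hj_w hcj
  have hg : M.W g := by rw [← hct]; exact M.w_comp c t hc_w ht_w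
  have hf : M.W f := M.w_cancel_right f g hg hgf
  have hh : M.W h := M.w_cancel_left g h hg hhg
  exact ⟨hf, hg, hh, M.w_comp f (g ≫ h) hf hhg⟩
end

section
/- Let D be a category, Q̂ : D → D a functor, α̂ : Id ⇒ Q̂ a natural transformation such that α̂_{Q̂ Z} is a monomorphism for every object Z. Suppose X is an object with Q̂(α̂_X) an isomorphism. Then α̂_{Q̂ X} = Q̂(α̂_X). (Idempotent-like coherence for pointed endofunctors with monic unit at Q̂-objects.) -/
open CategoryTheory CategoryTheory.Limits

universe v u

theorem stmt16 {D : Type u} [Category.{v} D] (Q : D ⥤ D) (α : 𝟭 D ⟶ Q)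
    (hmono : ∀ Z : D, Mono (α.app (Q.obj Z)))
    (X : D) (hiso : IsIso (Q.map (α.app X))) :
    α.app (Q.obj X) = Q.map (α.app X) := by
  have hnat : α.app X ≫ Q.map (α.app X) = α.app X ≫ α.app (Q.obj X) := by
    simpa using (α.naturality (α.app X)).symm
  have hQ : Q.map (Q.map (α.app X)) = Q.map (α.app (Q.obj X)) := by
    have := congrArg Q.map hnat
    simp only [Q.map_comp] at this
    exact (cancel_epi (Q.map (α.app X))).mp this
  set u : Q.obj X ⟶ Q.obj X := α.app (Q.obj X) ≫ inv (Q.map (α.app X)) with hu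
  have hQu : Q.map u = 𝟙 _ := by
    simp [hu, ← hQ]
  have hnat2 : u ≫ α.app (Q.obj X) = α.app (Q.obj X) ≫ Q.map u := by
    simpa using α.naturality u
  rw [hQu, Category.comp_id] at hnat2
  have hu1 : u = 𝟙 _ := by
    have := hmono X
    rw [← cancel_mono (α.app (Q.obj X))]
    simpa using hnat2
  rw [hu, IsIso.comp_inv_eq] at hu1
  simpa using hu1
end

section
/- Let C be a model category, and suppose every cofibration that is a Q-equivalence has the left lifting property with respect to a map f. If moreover f has the right lifting property with respect to all cofibrations (i.e., f is a trivial fibration), then f is a Q-fibration and a Q-equivalence; conversely, in the presence of (A1)–(A2), any map that is both a Q-fibration and Q-equivalence factors as a retract of a trivial fibration and is hence a trivial fibration. -/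
open CategoryTheory CategoryTheory.Limits

universe v u

variable {C : Type u} [Category.{v} C]

lemma retract_of_factor {C : Type u} [Category.{v} C] {X Y Z : C}
    (f : X ⟶ Y) (i : X ⟶ Z) (p : Z ⟶ Y) (h : i ≫ p = f)
    [HasLiftingProperty i f] : IsRetractOfArrow f p := by
  have sq : CommSq (𝟙 X) i f p := ⟨by simp [h]⟩
  exact ⟨i, sq.lift, 𝟙 Y, 𝟙 Y, by simpa using sq.fac_left, by simp, by simp [h],
    by simpa using sq.fac_right⟩

theorem stmt18 (M : ModelStructure C) (Q : C ⥤ C) (α : 𝟭 C ⟶ Q)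
    (A1 : ∀ {X Y : C} (f : X ⟶ Y), M.W f → M.W (Q.map f))
    (A2 : ∀ X : C, M.W (Q.map (α.app X)))
    (A2' : ∀ X : C, Mono (M.W.Q.map (α.app (Q.obj X))))
    {X Y : C} (f : X ⟶ Y) :
    ((∀ ⦃A B : C⦄ (i : A ⟶ B), M.Cof i → M.W (Q.map i) →
        HasLiftingProperty i f) →
      (∀ ⦃A B : C⦄ (i : A ⟶ B), M.Cof i → HasLiftingProperty i f) →
      QFib M Q f ∧ M.W (Q.map f)) ∧
    (QFib M Q f → M.W (Q.map f) → M.Fib f ∧ M.W f) := by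
  constructor
  · intro hQ hcof
    refine ⟨hQ, ?_⟩
    obtain ⟨Z, i, p, hci, hfp, hwp, hip⟩ := M.fact_cof_trivFib f
    have := hcof i hci
    have hr := retract_of_factor f i p hip
    exact A1 f (M.w_retract hr hwp)
  · intro hQf hWQf
    obtain ⟨Z, i, p, hci, hfp, hwp, hip⟩ := M.fact_cof_trivFib f
    have hQi : M.W (Q.map i) := by
      have : M.W (Q.map i ≫ Q.map p) := by
        rw [← Q.map_comp, hip]; exact hWQf
      exact M.w_cancel_right _ _ (A1 p hwp) this
    have := hQf i hci hQi
    have hr := retract_of_factor f i p hip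
    exact ⟨M.fib_retract hr hfp, M.w_retract hr hwp⟩
end
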